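/- For every n ≥ 2, E_{2,n}(x) = (1/n)(2x+1)·E_{2,n-1}(x) + (1/(2n))·(n·E_{1,n-1}(x) + (n-2)(2x+1)·E_{1,n-2}(x)), where E_{1,m} = C_m and E_{2,m} is defined by its h*-polynomial h*(t) = (1+t)^{m+1} + 2(m-1)t(1+t)^{m-1} via Σ_{k≥0} E_{2,m}(k)t^k = h*(t)/(1-t)^{m+2}. -/

import Mathlib

open Polynomial PowerSeries

/-- The polynomial `binom(n + x - k, n)` in the variable `x`. -/
noncomputable def binomPoly (n k : ℕ) : Polynomial ℚ :=
  Polynomial.C ((n.factorial : ℚ)⁻¹) *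
    ∏ j ∈ Finset.range n, (Polynomial.X + Polynomial.C ((n : ℚ) - k - j))

/-- The `n`-th cross-polynomial `C_n = E_{1,n}`. -/
noncomputable def crossPoly (n : ℕ) : Polynomial ℚ :=
  ∑ j ∈ Finset.range (n + 1), Polynomial.C (n.choose j : ℚ) * binomPoly n j

/-- `E` is the Ehrhart polynomial `E_{2,m}` of the symmetric edge polytope of `K_{2,m}`:
`∑_{k≥0} E(k)t^k = ((1+t)^{m+1} + 2(m-1) t (1+t)^{m-1})/(1-t)^{m+2}`. -/
def IsEhrhart2 (m : ℕ) (E : Polynomial ℚ) : Prop :=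
  (PowerSeries.mk fun k => E.eval (k : ℚ)) * (1 - PowerSeries.X : PowerSeries ℚ) ^ (m + 2)
    = (1 + PowerSeries.X : PowerSeries ℚ) ^ (m + 1)
      + PowerSeries.C (2 * ((m : ℚ) - 1)) * PowerSeries.X * (1 + PowerSeries.X) ^ (m - 1)

namespace EhrhartAux

lemma choose_succ_rat (a n : ℕ) :
    ((a.choose (n+1) : ℚ)) * (n+1) = (a.choose n : ℚ) * ((a:ℚ) - n) := by
  rcases le_or_gt n a with h | h
  · have h2 := congrArg (Nat.cast : ℕ → ℚ) (Nat.choose_succ_right_eq a n)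
    push_cast [Nat.cast_sub h] at h2
    linarith
  · rw [Nat.choose_eq_zero_of_lt h, Nat.choose_eq_zero_of_lt (h.trans (Nat.lt_succ_self n))]
    simp

lemma prod_eval (a n : ℕ) :
    ∏ i ∈ Finset.range n, ((a:ℚ) - i) = n.factorial * a.choose n := by
  induction n with
  | zero => simp
  | succ n ih =>
    rw [Finset.prod_range_succ, ih, Nat.factorial_succ]
    push_cast
    linear_combination -(n.factorial : ℚ) * choose_succ_rat a n

lemma binom_eval (n j k : ℕ) (hj : j ≤ n) :
    (binomPoly n j).eval (k:ℚ) = ((n + k - j).choose n : ℚ) := by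
  have hf : (n.factorial : ℚ) ≠ 0 := by exact_mod_cast n.factorial_ne_zero
  unfold binomPoly
  rw [eval_mul, eval_C, eval_prod]
  have hcast : ∀ i ∈ Finset.range n, ((X : ℚ[X]) + Polynomial.C ((n:ℚ) - j - i)).eval (k:ℚ)
      = ((n + k - j : ℕ):ℚ) - i := by
    intro i _
    have : ((n + k - j : ℕ):ℚ) = (n:ℚ) + k - j := by
      push_cast [Nat.cast_sub (hj.trans (Nat.le_add_right n k))]; ring
    simp [this]; ring
  rw [Finset.prod_congr rfl hcast, prod_eval, ← mul_assoc, inv_mul_cancel₀ hf, one_mul]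

lemma shift_mk (p j : ℕ) (hj : j ≤ p) :
    (PowerSeries.mk fun k => ((p + k - j).choose p : ℚ))
      = PowerSeries.X^j * PowerSeries.mk fun k => ((p + k).choose p : ℚ) := by
  ext k
  rw [PowerSeries.coeff_mk, PowerSeries.coeff_X_pow_mul']
  split_ifs with h
  · rw [PowerSeries.coeff_mk]
    congr 2
    omega
  · rw [Nat.choose_eq_zero_of_lt (by omega)]
    simp

lemma cross_gf (p : ℕ) :
    (PowerSeries.mk fun k => (crossPoly p).eval (k:ℚ)) * (1 - PowerSeries.X)^(p+1)
      = ((1+PowerSeries.X : ℚ⟦X⟧))^p := by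
  have base : (PowerSeries.mk fun k => ((p + k).choose p : ℚ)) * (1-PowerSeries.X)^(p+1) = 1 :=
    mk_add_choose_mul_one_sub_pow_eq_one ℚ p
  have hsum : (PowerSeries.mk fun k => (crossPoly p).eval (k:ℚ))
      = ∑ j ∈ Finset.range (p+1), PowerSeries.C (p.choose j : ℚ) *
          PowerSeries.mk fun k => ((p + k - j).choose p : ℚ) := by
    ext k
    rw [PowerSeries.coeff_mk, map_sum]
    unfold crossPoly
    rw [eval_finset_sum]
    refine Finset.sum_congr rfl fun j hj => ?_
    rw [eval_mul, eval_C, PowerSeries.coeff_C_mul, PowerSeries.coeff_mk,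
      binom_eval p j k (Nat.lt_succ_iff.mp (Finset.mem_range.mp hj))]
  rw [hsum, Finset.sum_mul]
  have : ∀ j ∈ Finset.range (p+1),
      (PowerSeries.C (p.choose j : ℚ) * PowerSeries.mk fun k => ((p + k - j).choose p : ℚ))
        * (1-PowerSeries.X)^(p+1) = PowerSeries.C (p.choose j : ℚ) * PowerSeries.X^j := by
    intro j hj
    rw [shift_mk p j (Nat.lt_succ_iff.mp (Finset.mem_range.mp hj))]
    calc PowerSeries.C (p.choose j : ℚ) *
          (PowerSeries.X^j * PowerSeries.mk fun k => ((p + k).choose p : ℚ))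
          * (1-PowerSeries.X)^(p+1)
        = PowerSeries.C (p.choose j : ℚ) * PowerSeries.X^j *
            ((PowerSeries.mk fun k => ((p + k).choose p : ℚ)) * (1-PowerSeries.X)^(p+1)) := by ring
      _ = PowerSeries.C (p.choose j : ℚ) * PowerSeries.X^j := by rw [base, mul_one]
  rw [Finset.sum_congr rfl this]
  rw [add_comm (1 : ℚ⟦X⟧) PowerSeries.X, add_pow]
  refine Finset.sum_congr rfl fun j hj => ?_
  simp [mul_comm]

lemma mk2k1 (f : ℕ → ℚ) :
    PowerSeries.mk (fun k => (2*(k:ℚ)+1) * f k)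
      = PowerSeries.mk f + 2 * (PowerSeries.X * (PowerSeries.derivative ℚ) (PowerSeries.mk f)) := by
  ext k
  rw [map_add, PowerSeries.coeff_mk, PowerSeries.coeff_mk]
  cases k with
  | zero =>
    have : (PowerSeries.coeff 0) (2 * (PowerSeries.X * (derivative ℚ) (mk f))) = 0 := by
      rw [PowerSeries.coeff_zero_eq_constantCoeff, map_mul, map_mul, PowerSeries.constantCoeff_X]
      ring
    rw [this]; push_cast; ring
  | succ k =>
    have h2 : (2 : ℚ⟦X⟧) = PowerSeries.C 2 := by rw [map_ofNat]
    rw [h2, PowerSeries.coeff_C_mul, PowerSeries.coeff_succ_X_mul, PowerSeries.coeff_derivative,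
      PowerSeries.coeff_mk]
    push_cast; ring

lemma ylem (p : ℕ) : (1+PowerSeries.X : ℚ⟦X⟧) *
    (PowerSeries.derivative ℚ) ((1+PowerSeries.X : ℚ⟦X⟧)^p)
      = (p:ℚ⟦X⟧) * (1+PowerSeries.X)^p := by
  have dY : (PowerSeries.derivative ℚ) (1+PowerSeries.X : ℚ⟦X⟧) = 1 := by simp
  rw [Derivation.leibniz_pow, dY, smul_eq_mul, mul_one, nsmul_eq_mul]
  cases p with
  | zero => simp
  | succ q => push_cast; ring

lemma zlem (p : ℕ) : (1-PowerSeries.X : ℚ⟦X⟧) *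
    (PowerSeries.derivative ℚ) ((1-PowerSeries.X : ℚ⟦X⟧)^p)
      = -((p:ℚ⟦X⟧) * (1-PowerSeries.X)^p) := by
  have dZ : (PowerSeries.derivative ℚ) (1-PowerSeries.X : ℚ⟦X⟧) = -1 := by
    rw [map_sub]; simp
  rw [Derivation.leibniz_pow, dZ, smul_eq_mul, nsmul_eq_mul]
  cases p with
  | zero => simp
  | succ q => push_cast; ring

end EhrhartAux

open EhrhartAux in
/-- For `n ≥ 2`:
`E_{2,n}(x) = (1/n)(2x+1) E_{2,n-1}(x) + (1/(2n))(n E_{1,n-1}(x) + (n-2)(2x+1) E_{1,n-2}(x))`. -/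
theorem ehrhart_relation_2n_recursive (n : ℕ) (hn : 2 ≤ n)
    (E₂ E₂' : Polynomial ℚ) (hE₂ : IsEhrhart2 n E₂) (hE₂' : IsEhrhart2 (n - 1) E₂') :
    E₂ = Polynomial.C ((n : ℚ)⁻¹) * ((2 * Polynomial.X + 1) * E₂')
        + Polynomial.C ((2 * (n : ℚ))⁻¹) *
          (Polynomial.C (n : ℚ) * crossPoly (n - 1)
            + Polynomial.C ((n : ℚ) - 2) * ((2 * Polynomial.X + 1) * crossPoly (n - 2))) := by
  obtain ⟨m, rfl⟩ : ∃ m, n = m + 2 := ⟨n - 2, by omega⟩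
  rw [show m + 2 - 1 = m + 1 by omega, show m + 2 - 2 = m by omega] at *
  have hnQ : ((m:ℚ) + 2) ≠ 0 := by positivity
  -- notation
  set D := (PowerSeries.derivative ℚ) with hD
  set A := PowerSeries.mk (fun k => E₂'.eval (k:ℚ)) with hA
  set B := PowerSeries.mk (fun k => (crossPoly (m+1)).eval (k:ℚ)) with hB
  set Cc := PowerSeries.mk (fun k => (crossPoly m).eval (k:ℚ)) with hCc
  set Me := PowerSeries.mk (fun k => E₂.eval (k:ℚ)) with hMe
  -- the generating function facts
  have e1 : A * (1-PowerSeries.X)^(m+3)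
      = (1+PowerSeries.X)^(m+2)
        + 2 * (m:ℚ⟦X⟧) * PowerSeries.X * (1+PowerSeries.X)^m := by
    unfold IsEhrhart2 at hE₂'
    rw [show (m+1)+2 = m+3 by omega, show (m+1)+1 = m+2 by omega,
      show (m+1)-1 = m by omega] at hE₂'
    rw [← hA] at hE₂'
    rw [hE₂']
    congr 1
    rw [show ((2:ℚ) * (((m+1:ℕ):ℚ) - 1)) = 2 * (m:ℚ) by push_cast; ring]
    rw [map_mul, map_ofNat, map_natCast]
  have e2 : B * (1-PowerSeries.X)^(m+2) = (1+PowerSeries.X)^(m+1) := cross_gf (m+1)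
  have e3 : Cc * (1-PowerSeries.X)^(m+1) = (1+PowerSeries.X)^m := cross_gf m
  have eE : Me * (1-PowerSeries.X)^(m+4)
      = (1+PowerSeries.X)^(m+3)
        + 2 * ((m:ℚ⟦X⟧)+1) * PowerSeries.X * (1+PowerSeries.X)^(m+1) := by
    unfold IsEhrhart2 at hE₂
    rw [show (m+2)+2 = m+4 by omega, show (m+2)+1 = m+3 by omega,
      show (m+2)-1 = m+1 by omega] at hE₂
    rw [← hMe] at hE₂
    rw [hE₂]
    congr 1
    rw [show ((2:ℚ) * (((m+2:ℕ):ℚ) - 1)) = 2 * ((m:ℚ)+1) by push_cast; ring]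
    rw [map_mul, map_ofNat, map_add, map_natCast, map_one]
  -- derivative facts
  have S1 : A * D ((1-PowerSeries.X)^(m+3)) + (1-PowerSeries.X)^(m+3) * D A
      = D ((1+PowerSeries.X)^(m+2))
        + 2 * (m:ℚ⟦X⟧) * (PowerSeries.X * D ((1+PowerSeries.X)^m) + (1+PowerSeries.X)^m) := by
    have dM : D (2 * (m:ℚ⟦X⟧)) = 0 := by
      have : PowerSeries.C (2*(m:ℚ)) = 2 * (m:ℚ⟦X⟧) := by rw [map_mul, map_ofNat, map_natCast]
      rw [← this, hD, PowerSeries.derivative_C]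
    have := congrArg D e1
    have d2 : (PowerSeries.derivative ℚ) (2:ℚ⟦X⟧) = 0 := by
      rw [show (2:ℚ⟦X⟧) = ((2:ℕ):ℚ⟦X⟧) by norm_num, Derivation.map_natCast]
    simp only [map_add, Derivation.leibniz, smul_eq_mul, dM, hD, PowerSeries.derivative_X,
      Derivation.map_natCast, d2] at this ⊢
    linear_combination this
  have S3 : Cc * D ((1-PowerSeries.X)^(m+1)) + (1-PowerSeries.X)^(m+1) * D Cc
      = D ((1+PowerSeries.X)^m) := by
    have := congrArg D e3
    simp only [Derivation.leibniz, smul_eq_mul, hD] at this ⊢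
    linear_combination this
  have ZL3 := zlem (m+3); have ZL1 := zlem (m+1)
  have YL2 := ylem (m+2); have YL0 := ylem m
  push_cast at ZL3 ZL1 YL2 YL0
  rw [← hD] at ZL3 ZL1 YL2 YL0
  -- nonvanishing
  have hdom : (1+PowerSeries.X : ℚ⟦X⟧) * (1-PowerSeries.X)^(m+4) ≠ 0 := by
    apply mul_ne_zero
    · intro h
      have := congrArg (PowerSeries.constantCoeff) h
      simp at this
    · apply pow_ne_zero
      intro h
      have := congrArg (PowerSeries.constantCoeff) h
      simp at this
  have hcC : (PowerSeries.C (2*((m:ℚ)+2))) ≠ 0 := by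
    intro h
    have h2 := congrArg (PowerSeries.constantCoeff) h
    rw [PowerSeries.constantCoeff_C, map_zero] at h2
    have : (0:ℚ) < 2*((m:ℚ)+2) := by positivity
    linarith
  -- the right-hand side as a power series
  have key : ∀ k : ℕ, E₂.eval (k:ℚ)
      = (Polynomial.C (((m:ℚ)+2)⁻¹) * ((2 * Polynomial.X + 1) * E₂')
        + Polynomial.C ((2 * ((m:ℚ)+2))⁻¹) *
          (Polynomial.C ((m:ℚ)+2) * crossPoly (m+1)
            + Polynomial.C ((m:ℚ)+2-2) * ((2 * Polynomial.X + 1) * crossPoly m))).eval (k:ℚ) := by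
    have hmk : PowerSeries.mk (fun k => (Polynomial.C (((m:ℚ)+2)⁻¹) * ((2 * Polynomial.X + 1) * E₂')
        + Polynomial.C ((2 * ((m:ℚ)+2))⁻¹) *
          (Polynomial.C ((m:ℚ)+2) * crossPoly (m+1)
            + Polynomial.C ((m:ℚ)+2-2) * ((2 * Polynomial.X + 1) * crossPoly m))).eval (k:ℚ))
        = PowerSeries.C (((m:ℚ)+2)⁻¹) * (A + 2 * (PowerSeries.X * D A))
          + PowerSeries.C ((2*((m:ℚ)+2))⁻¹) *
            (PowerSeries.C ((m:ℚ)+2) * B + PowerSeries.C ((m:ℚ)) *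
              (Cc + 2 * (PowerSeries.X * D Cc))) := by
      rw [hA, hCc, hD, ← mk2k1, ← mk2k1]
      ext k
      simp only [hB, PowerSeries.coeff_mk, map_add, add_mul, PowerSeries.coeff_C_mul,
        eval_add, eval_mul, eval_C, eval_X, eval_ofNat, eval_one]
      ring
    have main : Me = PowerSeries.C (((m:ℚ)+2)⁻¹) * (A + 2 * (PowerSeries.X * D A))
          + PowerSeries.C ((2*((m:ℚ)+2))⁻¹) *
            (PowerSeries.C ((m:ℚ)+2) * B + PowerSeries.C ((m:ℚ)) *
              (Cc + 2 * (PowerSeries.X * D Cc))) := by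
      have c1 : PowerSeries.C (2*((m:ℚ)+2)) * PowerSeries.C (((m:ℚ)+2)⁻¹)
          = PowerSeries.C 2 := by
        rw [← map_mul]; congr 1; field_simp
      have c2 : PowerSeries.C (2*((m:ℚ)+2)) * PowerSeries.C ((2*((m:ℚ)+2))⁻¹) = 1 := by
        rw [← map_mul, mul_inv_cancel₀ (by positivity), map_one]
      apply mul_left_cancel₀ hcC
      apply mul_right_cancel₀ hdom
      have expand : PowerSeries.C (2*((m:ℚ)+2))
          * (PowerSeries.C (((m:ℚ)+2)⁻¹) * (A + 2 * (PowerSeries.X * D A))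
            + PowerSeries.C ((2*((m:ℚ)+2))⁻¹) *
              (PowerSeries.C ((m:ℚ)+2) * B + PowerSeries.C ((m:ℚ)) *
                (Cc + 2 * (PowerSeries.X * D Cc))))
          = 2 * (A + 2 * (PowerSeries.X * D A))
            + (((m:ℚ⟦X⟧))+2) * B + ((m:ℚ⟦X⟧)) * (Cc + 2 * (PowerSeries.X * D Cc)) := by
        have g1 : PowerSeries.C ((m:ℚ)+2) = ((m:ℚ⟦X⟧)+2) := by
          rw [map_add, map_natCast, map_ofNat]
        have g2 : (PowerSeries.C ((m:ℚ))) = ((m:ℚ⟦X⟧)) := map_natCast _ _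
        have g3 : (PowerSeries.C (2:ℚ)) = 2 := map_ofNat _ 2
        linear_combination (A + 2*(PowerSeries.X * D A)) * c1
          + (PowerSeries.C ((m:ℚ)+2) * B
              + PowerSeries.C ((m:ℚ)) * (Cc + 2*(PowerSeries.X * D Cc))) * c2
          + (A + 2*(PowerSeries.X * D A)) * g3 + B * g1
          + (Cc + 2*(PowerSeries.X * D Cc)) * g2
      rw [expand]
      have hC2n : PowerSeries.C (2*((m:ℚ)+2)) = 2*((m:ℚ⟦X⟧)+2) := by
        simp only [map_mul, map_add, map_natCast, map_ofNat]
      rw [hC2n]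
      linear_combination (2*((m:ℚ⟦X⟧)+2)) * (1+PowerSeries.X) * eE
        + (-2*(1+PowerSeries.X)*(1-PowerSeries.X)
            - 4*PowerSeries.X*((m:ℚ⟦X⟧)+3)*(1+PowerSeries.X)) * e1
        + (-((m:ℚ⟦X⟧)+2)*(1+PowerSeries.X)*(1-PowerSeries.X)^2) * e2
        + (-(m:ℚ⟦X⟧)*(1+PowerSeries.X)*(1-PowerSeries.X)^3
            - 2*(m:ℚ⟦X⟧)*((m:ℚ⟦X⟧)+1)*PowerSeries.X*(1+PowerSeries.X)*(1-PowerSeries.X)^2) * e3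
        + (-4*PowerSeries.X*(1+PowerSeries.X)*(1-PowerSeries.X)) * S1
        + (-2*(m:ℚ⟦X⟧)*PowerSeries.X*(1+PowerSeries.X)*(1-PowerSeries.X)^3) * S3
        + (4*PowerSeries.X*(1+PowerSeries.X)*A) * ZL3
        + (2*(m:ℚ⟦X⟧)*PowerSeries.X*(1+PowerSeries.X)*(1-PowerSeries.X)^2*Cc) * ZL1
        + (-4*PowerSeries.X*(1-PowerSeries.X)) * YL2
        + (-8*(m:ℚ⟦X⟧)*PowerSeries.X^2*(1-PowerSeries.X)
            - 2*(m:ℚ⟦X⟧)*PowerSeries.X*(1-PowerSeries.X)^3) * YL0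
    intro k
    have := congrArg (PowerSeries.coeff k) (main.trans hmk.symm)
    rw [hMe] at this
    simpa only [PowerSeries.coeff_mk] using this
  -- conclude polynomial equality
  have hcst : ((m+2:ℕ):ℚ) = (m:ℚ)+2 := by push_cast; ring
  rw [hcst]
  apply Polynomial.eq_of_infinite_eval_eq
  exact Set.Infinite.mono (by rintro _ ⟨k, rfl⟩; exact key k)
    (Set.infinite_range_of_injective Nat.cast_injective)
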